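/- For any two integers r ≥ 1 and t ≥ 1, the odd Hadwiger number of the strong product of the star with r leaves and the star with t leaves satisfies: oh(S_r ⊠ S_t) ≥ r + 1 if r = t, and oh(S_r ⊠ S_t) ≥ min{r, t} + 2 if r ≠ t. -/

import Mathlib

open SimpleGraph

/-- `H` is an odd minor of `G`: there are pairwise vertex-disjoint subtrees of `G`, one for
each vertex of `H`, and a 2-colouring of the vertices which is proper on each tree, such that
for every edge of `H` there is a monochromatic edge of `G` between the corresponding trees. -/
def IsOddMinorOf {W V : Type*} (H : SimpleGraph W) (G : SimpleGraph V) : Prop :=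
  ∃ (T : W → G.Subgraph) (c : V → Fin 2),
    (∀ w, (T w).coe.IsTree) ∧
    (Pairwise fun w w' => Disjoint (T w).verts (T w').verts) ∧
    (∀ w, ∀ x y, (T w).Adj x y → c x ≠ c y) ∧
    (∀ w w', H.Adj w w' →
      ∃ x y, x ∈ (T w).verts ∧ y ∈ (T w').verts ∧ G.Adj x y ∧ c x = c y)

/-- The odd Hadwiger number of `G`: the largest `r` such that `K_r` is an odd minor of `G`. -/
noncomputable def oddHadwiger {V : Type*} [Fintype V] (G : SimpleGraph V) : ℕ :=
  sSup {r : ℕ | IsOddMinorOf (⊤ : SimpleGraph (Fin r)) G}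

/-- The Cartesian product `G □ H`. -/
def cartProd {α β : Type*} (G : SimpleGraph α) (H : SimpleGraph β) : SimpleGraph (α × β) where
  Adj x y := (x.1 = y.1 ∧ H.Adj x.2 y.2) ∨ (x.2 = y.2 ∧ G.Adj x.1 y.1)
  symm := by
    constructor
    rintro x y (⟨h1, h2⟩ | ⟨h1, h2⟩)
    · exact Or.inl ⟨h1.symm, h2.symm⟩
    · exact Or.inr ⟨h1.symm, h2.symm⟩
  loopless := by
    constructor
    rintro x (⟨_, h⟩ | ⟨_, h⟩)
    · exact H.irrefl h
    · exact G.irrefl h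

/-- The strong product `G ⊠ H`. -/
def strongProd {α β : Type*} (G : SimpleGraph α) (H : SimpleGraph β) : SimpleGraph (α × β) where
  Adj x y := (x.1 = y.1 ∧ H.Adj x.2 y.2) ∨ (x.2 = y.2 ∧ G.Adj x.1 y.1) ∨
    (G.Adj x.1 y.1 ∧ H.Adj x.2 y.2)
  symm := by
    constructor
    rintro x y (⟨h1, h2⟩ | ⟨h1, h2⟩ | ⟨h1, h2⟩)
    · exact Or.inl ⟨h1.symm, h2.symm⟩
    · exact Or.inr (Or.inl ⟨h1.symm, h2.symm⟩)
    · exact Or.inr (Or.inr ⟨h1.symm, h2.symm⟩)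
  loopless := by
    constructor
    rintro x (⟨_, h⟩ | ⟨_, h⟩ | ⟨h, _⟩)
    · exact H.irrefl h
    · exact G.irrefl h
    · exact G.irrefl h

/-- The lexicographic product `G ∘ H`. -/
def lexProd {α β : Type*} (G : SimpleGraph α) (H : SimpleGraph β) : SimpleGraph (α × β) where
  Adj x y := G.Adj x.1 y.1 ∨ (x.1 = y.1 ∧ H.Adj x.2 y.2)
  symm := by
    constructor
    rintro x y (h | ⟨h1, h2⟩)
    · exact Or.inl h.symm
    · exact Or.inr ⟨h1.symm, h2.symm⟩
  loopless := by
    constructor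
    rintro x (h | ⟨_, h⟩)
    · exact G.irrefl h
    · exact H.irrefl h

/-- The direct (tensor) product `G × H`. -/
def dirProd {α β : Type*} (G : SimpleGraph α) (H : SimpleGraph β) : SimpleGraph (α × β) where
  Adj x y := G.Adj x.1 y.1 ∧ H.Adj x.2 y.2
  symm := by
    constructor
    rintro x y ⟨h1, h2⟩
    exact ⟨h1.symm, h2.symm⟩
  loopless := by
    constructor
    rintro x ⟨h, _⟩
    exact G.irrefl h

/-- The star with `k` leaves, `S_k = K_{1,k}`. -/
def star (k : ℕ) : SimpleGraph (Fin 1 ⊕ Fin k) := completeBipartiteGraph (Fin 1) (Fin k)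

/-!
Write `a` and `b` for the centres of `S_r` and `S_t`, and colour a vertex `(x, y)` of the strong
product with `1` exactly when `x ≠ a` and `y ≠ b`. For `n ≤ min r t` pair leaves `a_i` and `b_i`
and take the bent paths `(a_i, b) - (a_i, b_i) - (a, b_i)`, coloured `0, 1, 0`. Their ends
`(a_i, b)` and `(a, b_j)` are adjacent and both coloured `0`, so the paths are the branch sets of
an odd `K_n`. The centre `(a, b)`, also coloured `0`, is adjacent to every `(a_i, b)`, giving
`K_{n+1}`; if `t > n` there is a spare leaf `b'`, and `(a, b')` is adjacent to `(a, b)` and to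
every `(a_i, b)`, giving `K_{n+2}` (symmetrically if `r > n`).
-/

namespace SimpleGraph

variable {V : Type*} {G : SimpleGraph V}

def starSubgraph (m : V) (L : Set V) (hL : ∀ l ∈ L, G.Adj m l) : G.Subgraph where
  verts := insert m L
  Adj x y := x = m ∧ y ∈ L ∨ y = m ∧ x ∈ L
  adj_sub := by
    rintro x y (⟨rfl, hy⟩ | ⟨rfl, hx⟩)
    exacts [hL y hy, (hL x hx).symm]
  edge_vert := by
    rintro x y (⟨rfl, -⟩ | ⟨-, hx⟩)
    exacts [Set.mem_insert _ _, Set.mem_insert_of_mem _ hx]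
  symm := ⟨fun _ _ => Or.symm⟩

theorem isTree_coe_starSubgraph (m : V) (L : Set V) (hL : ∀ l ∈ L, G.Adj m l) :
    (starSubgraph m L hL).coe.IsTree := by
  have hm : m ∉ L := fun h => G.loopless.irrefl m (hL m h)
  convert isTree_starGraph (⟨m, Set.mem_insert m L⟩ : (starSubgraph m L hL).verts)
  ext ⟨x, hx⟩ ⟨y, hy⟩
  simp only [Subgraph.coe_adj, starSubgraph, starGraph_adj, ne_eq]
  grind [starSubgraph]

end SimpleGraph

section OddMinor

variable {V : Type*} {G : SimpleGraph V}

theorem IsOddMinorOf.card_le {W : Type*} [Fintype W] [Fintype V] {H : SimpleGraph W}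
    (h : IsOddMinorOf H G) : Fintype.card W ≤ Fintype.card V := by
  obtain ⟨T, -, htree, hdisj, -, -⟩ := h
  let f w : (T w).verts := (htree w).connected.nonempty.some
  refine Fintype.card_le_of_injective (fun w => (f w).1) fun w w' hww' => ?_
  by_contra hne
  exact Set.disjoint_left.mp (hdisj hne) (f w).2 (by simp [hww'])

theorem le_oddHadwiger [Fintype V] {n : ℕ} (h : IsOddMinorOf (⊤ : SimpleGraph (Fin n)) G) :
    n ≤ oddHadwiger G :=
  le_csSup ⟨Fintype.card V, fun m hm => by simpa using hm.card_le⟩ h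

variable (G) in
structure OddCliqueModel (ι : Type*) where
  branch : ι → G.Subgraph
  color : V → Fin 2
  isTree_branch : ∀ i, (branch i).coe.IsTree
  pairwise_disjoint : Pairwise fun i j => Disjoint (branch i).verts (branch j).verts
  color_ne_of_adj : ∀ i x y, (branch i).Adj x y → color x ≠ color y
  exists_adj : ∀ i j, i ≠ j →
    ∃ x ∈ (branch i).verts, ∃ y ∈ (branch j).verts, G.Adj x y ∧ color x = color y

namespace OddCliqueModel

variable {ι : Type*}

theorem isOddMinorOf_top [Fintype ι] (M : OddCliqueModel G ι) :
    IsOddMinorOf (⊤ : SimpleGraph (Fin (Fintype.card ι))) G := by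
  let e := (Fintype.equivFin ι).symm
  refine ⟨fun w => M.branch (e w), M.color, fun w => M.isTree_branch _,
    fun w w' hne => M.pairwise_disjoint (e.injective.ne hne), fun w => M.color_ne_of_adj _,
    fun w w' hadj => ?_⟩
  obtain ⟨x, hx, y, hy, hxy, hc⟩ := M.exists_adj _ _ (e.injective.ne hadj.ne)
  exact ⟨x, y, hx, hy, hxy, hc⟩

theorem card_le_oddHadwiger [Fintype ι] [Fintype V] (M : OddCliqueModel G ι) :
    Fintype.card ι ≤ oddHadwiger G :=
  le_oddHadwiger M.isOddMinorOf_top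

/-- Adds the single vertex `z` as a new branch set, indexed by `none`. -/
def addVertex (M : OddCliqueModel G ι) (z : V) (hz : ∀ i, z ∉ (M.branch i).verts)
    (hadj : ∀ i, ∃ x ∈ (M.branch i).verts, G.Adj z x ∧ M.color z = M.color x) :
    OddCliqueModel G (Option ι) where
  branch i := i.elim (G.singletonSubgraph z) M.branch
  color := M.color
  isTree_branch
    | none => IsTree.coe_singletonSubgraph G z
    | some i => M.isTree_branch i
  pairwise_disjoint
    | none, none, h => (h rfl).elim
    | none, some j, _ => by simpa using hz j
    | some i, none, _ => by simpa using hz i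
    | some i, some j, h => M.pairwise_disjoint (h <| congrArg some ·)
  color_ne_of_adj
    | none, x, y, h => by simp at h
    | some i, x, y, h => M.color_ne_of_adj i x y h
  exists_adj
    | none, none, h => (h rfl).elim
    | none, some j, _ => by simpa using hadj j
    | some i, none, _ => by
      obtain ⟨x, hx, hzx, hc⟩ := hadj i
      exact ⟨x, hx, z, rfl, hzx.symm, hc.symm⟩
    | some i, some j, h => M.exists_adj i j (h <| congrArg some ·)

variable {M : OddCliqueModel G ι} {z : V} {hz : ∀ i, z ∉ (M.branch i).verts}
  {hadj : ∀ i, ∃ x ∈ (M.branch i).verts, G.Adj z x ∧ M.color z = M.color x}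

@[simp] theorem addVertex_branch_none :
    (M.addVertex z hz hadj).branch none = G.singletonSubgraph z := rfl

@[simp] theorem addVertex_branch_some (i : ι) :
    (M.addVertex z hz hadj).branch (some i) = M.branch i := rfl

@[simp] theorem addVertex_color : (M.addVertex z hz hadj).color = M.color := rfl

end OddCliqueModel

end OddMinor

section StrongProd

variable {α β ι : Type*} [DecidableEq α] [DecidableEq β] {G : SimpleGraph α} {H : SimpleGraph β}
  {a : α} {b : β} {f : ι ↪ α} {g : ι ↪ β}

variable (a b) in
def offAxesColoring (p : α × β) : Fin 2 := if p.1 ≠ a ∧ p.2 ≠ b then 1 else 0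

@[simp] theorem offAxesColoring_left (y : β) : offAxesColoring a b (a, y) = 0 := by
  simp [offAxesColoring]

@[simp] theorem offAxesColoring_right (x : α) : offAxesColoring a b (x, b) = 0 := by
  simp [offAxesColoring]

theorem offAxesColoring_of_ne {x : α} {y : β} (hx : x ≠ a) (hy : y ≠ b) :
    offAxesColoring a b (x, y) = 1 := by
  simp [offAxesColoring, hx, hy]

/-- The bent paths `(f i, b) - (f i, g i) - (a, g i)` as branch sets of a `K_ι`. -/
def cornerModel (hf : ∀ i, G.Adj a (f i)) (hg : ∀ i, H.Adj b (g i)) :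
    OddCliqueModel (strongProd G H) ι where
  branch i := starSubgraph (f i, g i) {(f i, b), (a, g i)} (by
    rintro _ (rfl | rfl)
    exacts [Or.inl ⟨rfl, (hg i).symm⟩, Or.inr (Or.inl ⟨rfl, (hf i).symm⟩)])
  color := offAxesColoring a b
  isTree_branch i := isTree_coe_starSubgraph _ _ _
  pairwise_disjoint i j hij := by
    simp [starSubgraph, Set.disjoint_left, f.injective.ne hij, g.injective.ne hij, (hf i).ne',
      (hg i).ne']
  color_ne_of_adj i x y hxy := by
    rcases hxy with ⟨rfl, rfl | rfl⟩ | ⟨rfl, rfl | rfl⟩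
    all_goals simp [offAxesColoring_of_ne (hf i).ne' (hg i).ne']
  exists_adj i j hij := ⟨(f i, b), by simp [starSubgraph], (a, g j), by simp [starSubgraph],
    Or.inr (Or.inr ⟨(hf i).symm, hg j⟩), by simp⟩

@[simp] theorem cornerModel_branch_verts (hf : ∀ i, G.Adj a (f i)) (hg : ∀ i, H.Adj b (g i))
    (i : ι) :
    ((cornerModel hf hg).branch i).verts = {(f i, g i), (f i, b), (a, g i)} := rfl

@[simp] theorem cornerModel_color (hf : ∀ i, G.Adj a (f i)) (hg : ∀ i, H.Adj b (g i)) :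
    (cornerModel hf hg).color = offAxesColoring a b := rfl

def centredCornerModel (hf : ∀ i, G.Adj a (f i)) (hg : ∀ i, H.Adj b (g i)) :
    OddCliqueModel (strongProd G H) (Option ι) :=
  (cornerModel hf hg).addVertex (a, b)
    (fun i => by simp [(hf i).ne, (hg i).ne])
    (fun i => ⟨(f i, b), by simp, Or.inr (Or.inl ⟨rfl, hf i⟩), by simp⟩)

variable [Fintype α] [Fintype β] [Fintype ι]

theorem card_add_one_le_oddHadwiger_strongProd
    (hf : ∀ i, G.Adj a (f i)) (hg : ∀ i, H.Adj b (g i)) :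
    Fintype.card ι + 1 ≤ oddHadwiger (strongProd G H) := by
  simpa using (centredCornerModel hf hg).card_le_oddHadwiger

theorem card_add_two_le_oddHadwiger_strongProd_of_adj_right
    (hf : ∀ i, G.Adj a (f i)) (hg : ∀ i, H.Adj b (g i)) (b' : β)
    (hb' : H.Adj b b') (hgb' : ∀ i, g i ≠ b') :
    Fintype.card ι + 2 ≤ oddHadwiger (strongProd G H) := by
  refine le_of_eq_of_le (by simp)
    ((centredCornerModel hf hg).addVertex (a, b') ?_ ?_).card_le_oddHadwiger
  · rintro (_ | i)
    · simp [centredCornerModel, hb'.ne']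
    · simp [centredCornerModel, (hf i).ne, (hgb' i).symm]
  · rintro (_ | i)
    · exact ⟨(a, b), by simp [centredCornerModel], Or.inl ⟨rfl, hb'.symm⟩,
        by simp [centredCornerModel]⟩
    · exact ⟨(f i, b), by simp [centredCornerModel], Or.inr (Or.inr ⟨hf i, hb'.symm⟩),
        by simp [centredCornerModel]⟩

theorem card_add_two_le_oddHadwiger_strongProd_of_adj_left
    (hf : ∀ i, G.Adj a (f i)) (hg : ∀ i, H.Adj b (g i)) (a' : α)
    (ha' : G.Adj a a') (hfa' : ∀ i, f i ≠ a') :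
    Fintype.card ι + 2 ≤ oddHadwiger (strongProd G H) := by
  refine le_of_eq_of_le (by simp)
    ((centredCornerModel hf hg).addVertex (a', b) ?_ ?_).card_le_oddHadwiger
  · rintro (_ | i)
    · simp [centredCornerModel, ha'.ne']
    · simp [centredCornerModel, (hg i).ne, (hfa' i).symm]
  · rintro (_ | i)
    · exact ⟨(a, b), by simp [centredCornerModel], Or.inr (Or.inl ⟨rfl, ha'.symm⟩),
        by simp [centredCornerModel]⟩
    · exact ⟨(a, g i), by simp [centredCornerModel], Or.inr (Or.inr ⟨ha'.symm, hg i⟩),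
        by simp [centredCornerModel]⟩

end StrongProd

theorem star_adj_center_leaf (k : ℕ) (i : Fin k) : (_root_.star k).Adj (.inl 0) (.inr i) := by
  simp [_root_.star]

theorem stmt_7_general (r t : ℕ) :
    (r = t → oddHadwiger (strongProd (star r) (star t)) ≥ r + 1) ∧
    (r ≠ t → oddHadwiger (strongProd (star r) (star t)) ≥ min r t + 2) := by
  refine ⟨?_, fun hne => ?_⟩
  · rintro rfl
    simpa using card_add_one_le_oddHadwiger_strongProd (f := .inr) (g := .inr)
      (star_adj_center_leaf r) (star_adj_center_leaf r)
  rcases hne.lt_or_gt with h | h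
  · simpa [h.le] using card_add_two_le_oddHadwiger_strongProd_of_adj_right (f := .inr)
      (g := (Fin.castLEEmb h.le).trans .inr) (star_adj_center_leaf r)
      (fun i => star_adj_center_leaf t _) (.inr ⟨r, h⟩) (star_adj_center_leaf t _)
      (fun i => by simp [Fin.ext_iff, i.isLt.ne])
  · simpa [h.le] using card_add_two_le_oddHadwiger_strongProd_of_adj_left
      (f := (Fin.castLEEmb h.le).trans .inr) (g := .inr) (fun i => star_adj_center_leaf r _)
      (star_adj_center_leaf t) (.inr ⟨t, h⟩) (star_adj_center_leaf r _)
      (fun i => by simp [Fin.ext_iff, i.isLt.ne])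

theorem stmt_7 (r t : ℕ) (hr : 1 ≤ r) (ht : 1 ≤ t) :
    (r = t → oddHadwiger (strongProd (star r) (star t)) ≥ r + 1) ∧
    (r ≠ t → oddHadwiger (strongProd (star r) (star t)) ≥ min r t + 2) :=
  stmt_7_general r t
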